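/- arXiv:1405.5187 — 2 statements merged into one kernel-verified Lean document; each statement's English description precedes it below -/
import Mathlib

section
/- Let V and W be k-dimensional linear subspaces of ℝ^{n+1} through the origin. If every point of the unit ball intersected with V lies within distance δ of W (for some δ ∈ (0,1)), then every point of the unit ball intersected with W lies within distance δ of V. -/
/-! On `V` the hypothesis reads `‖v - P_W v‖ ≤ δ ‖v‖`. As `δ < 1`, `P_W` is injective on `V`,
so by equality of dimensions it maps `V` onto `W`. For `w = P_W v` Pythagoras gives
`(1 - δ²) ‖v‖² ≤ ‖w‖²`, while `‖w‖² = ⟪v, P_V w⟫ ≤ ‖v‖ ‖P_V w‖`; together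
`(1 - δ²) ‖w‖² ≤ ‖P_V w‖²`, i.e. `‖w - P_V w‖ ≤ δ ‖w‖`. -/

open Metric

variable {E : Type*} [NormedAddCommGroup E] [InnerProductSpace ℝ E]

namespace Submodule

theorem infDist_eq_norm_sub_starProjection (K : Submodule ℝ E) [K.HasOrthogonalProjection]
    (x : E) : infDist x K = ‖x - K.starProjection x‖ := by
  rw [infDist_eq_iInf, starProjection_minimal]
  simp only [dist_eq_norm]
  rfl

theorem norm_sub_starProjection_le_of_forall_infDist_le {V W : Submodule ℝ E}
    [W.HasOrthogonalProjection] {δ : ℝ} (h : ∀ v ∈ V, ‖v‖ ≤ 1 → infDist v W ≤ δ)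
    {v : E} (hv : v ∈ V) : ‖v - W.starProjection v‖ ≤ δ * ‖v‖ := by
  rcases eq_or_ne v 0 with rfl | hv0
  · simp
  have hv_pos : 0 < ‖v‖ := norm_pos_iff.2 hv0
  have hunit := h (‖v‖⁻¹ • v) (V.smul_mem _ hv)
    (by rw [norm_smul, norm_inv, norm_norm, inv_mul_cancel₀ hv_pos.ne'])
  rwa [infDist_eq_norm_sub_starProjection, map_smul, ← smul_sub, norm_smul, norm_inv,
    norm_norm, inv_mul_le_iff₀ hv_pos, mul_comm] at hunit

theorem norm_starProjection_sub_starProjection_le {V W : Submodule ℝ E}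
    [V.HasOrthogonalProjection] [W.HasOrthogonalProjection] {δ : ℝ} (hδ : 0 ≤ δ)
    {v : E} (hv : v ∈ V) (hvW : ‖v - W.starProjection v‖ ≤ δ * ‖v‖) :
    ‖W.starProjection v - V.starProjection (W.starProjection v)‖ ≤
      δ * ‖W.starProjection v‖ := by
  set w := W.starProjection v
  set p := V.starProjection w
  have hpyth_v : ‖v‖ ^ 2 = ‖w‖ ^ 2 + ‖v - w‖ ^ 2 := by
    rw [norm_sq_eq_add_norm_sq_starProjection v W, starProjection_orthogonal_val]
  have hpyth_w : ‖w‖ ^ 2 = ‖p‖ ^ 2 + ‖w - p‖ ^ 2 := by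
    rw [norm_sq_eq_add_norm_sq_starProjection w V, starProjection_orthogonal_val]
  have hinner : ‖w‖ ^ 2 = inner ℝ v p := calc
    ‖w‖ ^ 2 = inner ℝ v (W.starProjection w) :=
      (real_inner_self_eq_norm_sq w).symm.trans (inner_starProjection_left_eq_right W v w)
    _ = inner ℝ (V.starProjection v) w := by
      rw [starProjection_eq_self_iff.2 (starProjection_apply_mem W v),
        starProjection_eq_self_iff.2 hv]
    _ = inner ℝ v p := inner_starProjection_left_eq_right V v w
  have hcs : ‖w‖ ^ 2 ≤ ‖v‖ * ‖p‖ := hinner ▸ real_inner_le_norm v p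
  have hv_le : (1 - δ ^ 2) * ‖v‖ ^ 2 ≤ ‖w‖ ^ 2 := by
    nlinarith [norm_nonneg (v - w)]
  have hsq : (‖w‖ ^ 2) ^ 2 ≤ (‖v‖ * ‖p‖) ^ 2 := pow_le_pow_left₀ (sq_nonneg _) hcs 2
  have hp_ge : ‖w‖ ^ 2 * ((1 - δ ^ 2) * ‖w‖ ^ 2) ≤ ‖w‖ ^ 2 * ‖p‖ ^ 2 := by
    rcases le_or_gt 0 (1 - δ ^ 2) with hδ1 | hδ1
    · calc ‖w‖ ^ 2 * ((1 - δ ^ 2) * ‖w‖ ^ 2)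
          = (1 - δ ^ 2) * (‖w‖ ^ 2) ^ 2 := by ring
        _ ≤ (1 - δ ^ 2) * (‖v‖ * ‖p‖) ^ 2 := mul_le_mul_of_nonneg_left hsq hδ1
        _ = (1 - δ ^ 2) * ‖v‖ ^ 2 * ‖p‖ ^ 2 := by ring
        _ ≤ ‖w‖ ^ 2 * ‖p‖ ^ 2 := mul_le_mul_of_nonneg_right hv_le (sq_nonneg _)
    · nlinarith [sq_nonneg ‖w‖, sq_nonneg ‖p‖]
  rw [← pow_le_pow_iff_left₀ (norm_nonneg _) (by positivity) two_ne_zero]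
  rcases (sq_nonneg ‖w‖).eq_or_lt with hw | hw
  · nlinarith
  · nlinarith [le_of_mul_le_mul_left hp_ge hw]

theorem exists_mem_starProjection_eq_of_finrank_eq {V W : Submodule ℝ E} [FiniteDimensional ℝ V]
    [FiniteDimensional ℝ W] (hVW : Module.finrank ℝ V = Module.finrank ℝ W) {δ : ℝ} (hδ : δ < 1)
    (h : ∀ v ∈ V, ‖v - W.starProjection v‖ ≤ δ * ‖v‖) {w : E} (hw : w ∈ W) :
    ∃ v ∈ V, W.starProjection v = w := by
  set f : V →ₗ[ℝ] W := W.orthogonalProjectionOnto.toLinearMap ∘ₗ V.subtype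
  have hf : Function.Injective f := by
    rw [← LinearMap.ker_eq_bot, LinearMap.ker_eq_bot']
    intro v hv0
    have hPv : W.starProjection (v : E) = 0 := congrArg Subtype.val hv0
    have hv := h v v.2
    rw [hPv, sub_zero] at hv
    exact Subtype.ext (norm_le_zero_iff.1 (by nlinarith [norm_nonneg (v : E)]))
  obtain ⟨v, hv⟩ := (LinearMap.injective_iff_surjective_of_finrank_eq_finrank hVW).1 hf ⟨w, hw⟩
  exact ⟨v, v.2, congrArg Subtype.val hv⟩

theorem norm_sub_starProjection_le_of_finrank_eq {V W : Submodule ℝ E} [FiniteDimensional ℝ V]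
    [FiniteDimensional ℝ W] (hVW : Module.finrank ℝ V = Module.finrank ℝ W) {δ : ℝ}
    (hδ0 : 0 ≤ δ) (hδ1 : δ < 1) (h : ∀ v ∈ V, ‖v - W.starProjection v‖ ≤ δ * ‖v‖) {w : E}
    (hw : w ∈ W) : ‖w - V.starProjection w‖ ≤ δ * ‖w‖ := by
  obtain ⟨v, hv, rfl⟩ := exists_mem_starProjection_eq_of_finrank_eq hVW hδ1 h hw
  exact norm_starProjection_sub_starProjection_le hδ0 hv (h v hv)

end Submodule

theorem stmt_0_general (n k : ℕ) (V W : Submodule ℝ (EuclideanSpace ℝ (Fin (n + 1))))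
    (hV : Module.finrank ℝ V = k) (hW : Module.finrank ℝ W = k)
    (δ : ℝ) (hδ1 : δ < 1)
    (h : ∀ v ∈ V, ‖v‖ ≤ 1 → Metric.infDist v (W : Set (EuclideanSpace ℝ (Fin (n + 1)))) ≤ δ) :
    ∀ w ∈ W, ‖w‖ ≤ 1 → Metric.infDist w (V : Set (EuclideanSpace ℝ (Fin (n + 1)))) ≤ δ := by
  have hδ0 : 0 ≤ δ := infDist_nonneg.trans (h 0 V.zero_mem (by simp))
  intro w hw hw1
  calc infDist w V = ‖w - V.starProjection w‖ := V.infDist_eq_norm_sub_starProjection w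
    _ ≤ δ * ‖w‖ := Submodule.norm_sub_starProjection_le_of_finrank_eq (hV.trans hW.symm) hδ0 hδ1
        (fun _ hv ↦ Submodule.norm_sub_starProjection_le_of_forall_infDist_le h hv) hw
    _ ≤ δ := mul_le_of_le_one_right hδ0 hw1

/-- If every point of the unit ball in the `k`-plane `V` lies within distance `δ` of the
`k`-plane `W` (`δ ∈ (0,1)`), then every point of the unit ball in `W` lies within
distance `δ` of `V`. -/
theorem stmt_0 (n k : ℕ) (V W : Submodule ℝ (EuclideanSpace ℝ (Fin (n + 1))))
    (hV : Module.finrank ℝ V = k) (hW : Module.finrank ℝ W = k)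
    (δ : ℝ) (hδ0 : 0 < δ) (hδ1 : δ < 1)
    (h : ∀ v ∈ V, ‖v‖ ≤ 1 → Metric.infDist v (W : Set (EuclideanSpace ℝ (Fin (n + 1)))) ≤ δ) :
    ∀ w ∈ W, ‖w‖ ≤ 1 → Metric.infDist w (V : Set (EuclideanSpace ℝ (Fin (n + 1)))) ≤ δ :=
  stmt_0_general n k V W hV hW δ hδ1 h
end

section
/- Let S ⊆ ℝ^{n+1} × ℝ be a connected set which is the graph of a 2-Hölder function with vanishing constant over a subset Ω ⊆ ℝ^{n+1} with H_2(Ω) < ∞. Then S is contained in a time-slice, i.e., there exists t₀ ∈ ℝ with S ⊆ ℝ^{n+1} × {t₀}. -/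
/-!
Cut `Ω` into countably many measurable pieces of diameter at most `ε`. On each piece `u` is
`2`-Hölder with constant `γ ε`, so `μH[1] (u '' Ω) ≤ γ ε * μH[2] Ω`, and letting `ε → 0` gives
`μH[1] (u '' Ω) = 0`. The time coordinates of `S` form the connected set `u '' Ω ⊆ ℝ`, an
interval of Lebesgue measure zero, hence a single point.
-/

open MeasureTheory Set Filter Topology Function
open scoped NNReal ENNReal

theorem exists_measurable_partition_dist_le (X : Type*) [PseudoMetricSpace X]
    [TopologicalSpace.SeparableSpace X] [MeasurableSpace X] [OpensMeasurableSpace X]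
    {ε : ℝ} (hε : 0 < ε) :
    ∃ Q : ℕ → Set X, (∀ k, MeasurableSet (Q k)) ∧ Pairwise (Disjoint on Q) ∧
      ⋃ k, Q k = univ ∧ ∀ k, ∀ x ∈ Q k, ∀ y ∈ Q k, dist x y ≤ ε := by
  rcases isEmpty_or_nonempty X with hX | hX
  · exact ⟨fun _ => ∅, fun _ => .empty, fun _ _ _ => disjoint_bot_left,
      Subsingleton.elim _ _, fun _ _ h => h.elim⟩
  obtain ⟨c, hc⟩ := TopologicalSpace.exists_dense_seq X
  have hcover : ⋃ k, Metric.ball (c k) (ε / 2) = univ := by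
    simpa [biUnion_range] using (Metric.dense_iff_iUnion_ball _).1 hc (ε / 2) (by positivity)
  refine ⟨disjointed fun k => Metric.ball (c k) (ε / 2),
    .disjointed fun _ => measurableSet_ball, disjoint_disjointed _,
    by rw [iUnion_disjointed, hcover], fun k x hx y hy => ?_⟩
  have hx' := disjointed_subset _ k hx
  have hy' := disjointed_subset _ k hy
  rw [Metric.mem_ball] at hx' hy'
  linarith [dist_triangle_right x y (c k)]

def VanishingHolderOn {X Y : Type*} [PseudoMetricSpace X] [PseudoEMetricSpace Y] (r : ℝ≥0)
    (f : X → Y) (s : Set X) : Prop :=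
  ∀ C : ℝ≥0, 0 < C → ∃ ε > 0, ∀ x ∈ s, ∀ y ∈ s, dist x y ≤ ε →
    edist (f x) (f y) ≤ C * edist x y ^ (r : ℝ)

theorem vanishingHolderOn_of_dist_le_modulus {X Y : Type*} [PseudoMetricSpace X]
    [PseudoMetricSpace Y] {r : ℕ} {γ : ℝ → ℝ} (hγ : Tendsto γ (𝓝[>] 0) (𝓝 0)) {f : X → Y}
    {s : Set X}
    (hf : ∀ ε > 0, ∀ x ∈ s, ∀ y ∈ s, dist x y ≤ ε → dist (f x) (f y) ≤ γ ε * dist x y ^ r) :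
    VanishingHolderOn r f s := by
  intro C hC
  obtain ⟨ε, hγε, hε⟩ := ((hγ.eventually (gt_mem_nhds (NNReal.coe_pos.2 hC))).and
    self_mem_nhdsWithin).exists
  refine ⟨ε, hε, fun x hx y hy hxy => ?_⟩
  rw [NNReal.coe_natCast, ENNReal.rpow_natCast, edist_dist, edist_dist,
    ← ENNReal.ofReal_pow dist_nonneg, ← ENNReal.ofReal_coe_nnreal,
    ← ENNReal.ofReal_mul C.coe_nonneg]
  refine ENNReal.ofReal_le_ofReal ((hf ε hε x hx y hy hxy).trans ?_)
  gcongr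

section VanishingHolder

variable {X Y : Type*} [MetricSpace X] [TopologicalSpace.SeparableSpace X] [MeasurableSpace X]
  [BorelSpace X] [EMetricSpace Y] [MeasurableSpace Y] [BorelSpace Y]

theorem hausdorffMeasure_image_le_of_local_holder {C r : ℝ≥0} (hr : 0 < r) {d : ℝ}
    (hd : 0 ≤ d) {ε : ℝ} (hε : 0 < ε) {f : X → Y} {s : Set X}
    (hf : ∀ x ∈ s, ∀ y ∈ s, dist x y ≤ ε → edist (f x) (f y) ≤ C * edist x y ^ (r : ℝ)) :
    μH[d] (f '' s) ≤ (C : ℝ≥0∞) ^ d * μH[r * d] s := by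
  obtain ⟨Q, hQm, hQd, hQu, hQε⟩ := exists_measurable_partition_dist_le X hε
  have hpiece : ∀ k, HolderOnWith C r f (s ∩ Q k) := fun k x hx y hy =>
    hf x hx.1 y hy.1 (hQε k x hx.2 y hy.2)
  calc μH[d] (f '' s) = μH[d] (⋃ k, f '' (s ∩ Q k)) := by
        rw [← image_iUnion, ← inter_iUnion, hQu, inter_univ]
    _ ≤ ∑' k, μH[d] (f '' (s ∩ Q k)) := measure_iUnion_le _
    _ ≤ ∑' k, (C : ℝ≥0∞) ^ d * μH[r * d].restrict s (Q k) := by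
        gcongr with k
        rw [Measure.restrict_apply (hQm k), inter_comm (Q k)]
        exact (hpiece k).hausdorffMeasure_image_le hr hd
    -- `s` need not be measurable, but `μH[r * d].restrict s` is additive on the pieces `Q k`.
    _ = (C : ℝ≥0∞) ^ d * μH[r * d] s := by
        rw [ENNReal.tsum_mul_left, ← measure_iUnion hQd hQm, hQu, Measure.restrict_apply_univ]

theorem VanishingHolderOn.hausdorffMeasure_image_eq_zero {r : ℝ≥0} {f : X → Y} {s : Set X}
    (hf : VanishingHolderOn r f s) (hr : 0 < r) {d : ℝ} (hd : 0 < d)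
    (hs : μH[r * d] s ≠ ∞) : μH[d] (f '' s) = 0 := by
  have hbound : ∀ C : ℝ≥0, 0 < C → μH[d] (f '' s) ≤ (C : ℝ≥0∞) ^ d * μH[r * d] s := by
    intro C hC
    obtain ⟨ε, hε, hCε⟩ := hf C hC
    exact hausdorffMeasure_image_le_of_local_holder hr hd.le hε hCε
  have hlim : Tendsto (fun C : ℝ≥0 => (C : ℝ≥0∞) ^ d * μH[r * d] s) (𝓝[>] 0) (𝓝 0) := by
    have : Tendsto (fun C : ℝ≥0 => (C : ℝ≥0∞) ^ d) (𝓝 0) (𝓝 0) := by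
      simpa [comp_def, ENNReal.zero_rpow_of_pos hd] using
        ((ENNReal.continuous_rpow_const (y := d)).comp ENNReal.continuous_coe).tendsto (0 : ℝ≥0)
    simpa using (ENNReal.Tendsto.mul_const (this.mono_left nhdsWithin_le_nhds) (Or.inr hs))
  exact le_antisymm (ge_of_tendsto hlim (eventually_nhdsWithin_of_forall hbound)) zero_le

end VanishingHolder

theorem IsPreconnected.subsingleton_of_volume_eq_zero {s : Set ℝ} (hs : IsPreconnected s)
    (h0 : volume s = 0) : s.Subsingleton := by
  intro a ha b hb
  by_contra hab
  wlog hlt : a < b generalizing a b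
  · exact this hb ha (Ne.symm hab) ((not_lt.1 hlt).lt_of_ne (Ne.symm hab))
  have : volume (Icc a b) = 0 := measure_mono_null (hs.ordConnected.out ha hb) h0
  simp only [Real.volume_Icc, ENNReal.ofReal_eq_zero] at this
  linarith

theorem stmt_7_general (n : ℕ) (Ω : Set (EuclideanSpace ℝ (Fin (n + 1))))
    (hΩ : μH[2] Ω < ⊤) (u : EuclideanSpace ℝ (Fin (n + 1)) → ℝ)
    (γ : ℝ → ℝ) (hcont : Continuous γ) (hγ0 : γ 0 = 0)
    (h : ∀ ε > (0 : ℝ), ∀ x ∈ Ω, ∀ y ∈ Ω, dist x y ≤ ε → |u x - u y| ≤ γ ε * dist x y ^ 2)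
    (S : Set (EuclideanSpace ℝ (Fin (n + 1)) × ℝ))
    (hS : S = {p | p.1 ∈ Ω ∧ p.2 = u p.1})
    (hconn : IsConnected S) :
    ∃ t₀ : ℝ, S ⊆ {p : EuclideanSpace ℝ (Fin (n + 1)) × ℝ | p.2 = t₀} := by
  have hvan : VanishingHolderOn (2 : ℕ) u Ω :=
    vanishingHolderOn_of_dist_le_modulus ((hcont.tendsto' 0 0 hγ0).mono_left nhdsWithin_le_nhds)
      (by simpa only [Real.dist_eq] using h)
  have hnull : μH[1] (u '' Ω) = 0 :=
    hvan.hausdorffMeasure_image_eq_zero two_pos one_pos (by norm_num [hΩ.ne])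
  have hgraph : S = Ω.graphOn u := by
    ext p
    simp [hS, eq_comm]
  have hproj : (Prod.snd '' S).Subsingleton := by
    refine (hconn.isPreconnected.image _ continuous_snd.continuousOn)
      |>.subsingleton_of_volume_eq_zero ?_
    rwa [hgraph, image_snd_graphOn, ← hausdorffMeasure_real]
  obtain ⟨p, hp⟩ := hconn.nonempty
  exact ⟨p.2, fun q hq => hproj (mem_image_of_mem _ hq) (mem_image_of_mem _ hp)⟩

/-- A connected set `S ⊆ ℝ^{n+1} × ℝ` which is the graph of a `2`-Hölder function with
vanishing constant over a set `Ω` of finite `2`-dimensional Hausdorff measure is contained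
in a time-slice. -/
theorem stmt_7 (n : ℕ) (Ω : Set (EuclideanSpace ℝ (Fin (n + 1))))
    (hΩ : μH[2] Ω < ⊤) (u : EuclideanSpace ℝ (Fin (n + 1)) → ℝ)
    (γ : ℝ → ℝ) (hcont : Continuous γ) (hmono : Monotone γ) (hγ0 : γ 0 = 0)
    (hγpos : ∀ ε, 0 ≤ ε → 0 ≤ γ ε)
    (h : ∀ ε > (0 : ℝ), ∀ x ∈ Ω, ∀ y ∈ Ω, dist x y ≤ ε → |u x - u y| ≤ γ ε * dist x y ^ 2)
    (S : Set (EuclideanSpace ℝ (Fin (n + 1)) × ℝ))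
    (hS : S = {p | p.1 ∈ Ω ∧ p.2 = u p.1})
    (hconn : IsConnected S) :
    ∃ t₀ : ℝ, S ⊆ {p : EuclideanSpace ℝ (Fin (n + 1)) × ℝ | p.2 = t₀} :=
  stmt_7_general n Ω hΩ u γ hcont hγ0 h S hS hconn
end
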